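/- Let d ≥ 1 be an integer and let Ψ₁(u) = ∏_{i=1}^{d} sinc(u_i/4)⁴. Then for every natural number k, every h ∈ ℝ^d and all vectors q₁, …, q_k ∈ ℝ^d, the k-th Fréchet derivative of Ψ₁ at h satisfies |D^k Ψ₁(h)[q₁, …, q_k]| ≤ d^{k/2} · ∏_{l=1}^{k} ‖q_l‖₂. -/

import Mathlib

/-- The cardinal sine function: `sinc z = sin z / z` for `z ≠ 0`, `sinc 0 = 1`. -/
noncomputable def sinc (x : ℝ) : ℝ := if x = 0 then 1 else Real.sin x / x

/-- The sinc-4 kernel (bandwidth one) on `ℝ^d`. -/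
noncomputable def Psi1 (d : ℕ) (u : EuclideanSpace ℝ (Fin d)) : ℝ :=
  ∏ i, sinc (u i / 4) ^ 4

/-!
Since `sinc x = ∫₀¹ cos (x t) dt`, differentiating under the integral shows that every derivative
of `sinc` is bounded by `1`; by the Leibniz rule the `n`-th derivative of `sinc (x / 4) ^ 4` is then
bounded by `(4 · ¼) ^ n = 1`. Because `Ψ₁` is a product of such functions of separate coordinates,
a derivative in direction `q` splits as `∑ᵢ qᵢ ∂ᵢ` and each `∂ᵢ` only hits one factor, so by
induction `|D^k Ψ₁(h)[q₁, …, q_k]| ≤ ∏ₗ ‖q_l‖₁`. Cauchy–Schwarz, `‖q‖₁ ≤ √d ‖q‖₂`, finishes.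
-/

open MeasureTheory
open scoped Real ContDiff Interval

/-- The `m`-th derivative of `sinc x = ∫₀¹ cos (x t) dt`, differentiating under the integral. -/
noncomputable def sincDeriv (m : ℕ) (x : ℝ) : ℝ :=
  ∫ t in (0 : ℝ)..1, t ^ m * Real.cos (x * t + m * (π / 2))

lemma norm_pow_mul_cos_le_one (m : ℕ) (y : ℝ) {t : ℝ} (ht : t ∈ Ι (0 : ℝ) 1) :
    ‖t ^ m * Real.cos y‖ ≤ 1 := by
  rw [Set.uIoc_of_le zero_le_one] at ht
  rw [norm_mul, norm_pow, Real.norm_of_nonneg ht.1.le]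
  exact mul_le_one₀ (pow_le_one₀ ht.1.le ht.2) (norm_nonneg _) (Real.abs_cos_le_one y)

lemma sincDeriv_zero : sincDeriv 0 = sinc := by
  funext x
  simp only [sincDeriv, pow_zero, Nat.cast_zero, zero_mul, add_zero, one_mul]
  by_cases hx : x = 0
  · simp [hx, sinc]
  · have hprim (t : ℝ) : HasDerivAt (fun t => Real.sin (x * t) / x) (Real.cos (x * t)) t := by
      refine (((hasDerivAt_id' t).const_mul x).sin.div_const x).congr_deriv ?_
      field_simp
    rw [intervalIntegral.integral_eq_sub_of_hasDerivAt (fun t _ => hprim t)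
      ((by fun_prop : Continuous fun t => Real.cos (x * t)).intervalIntegrable _ _)]
    simp [sinc, hx]

lemma hasDerivAt_sincDeriv (m : ℕ) (x : ℝ) :
    HasDerivAt (sincDeriv m) (sincDeriv (m + 1) x) x := by
  have hderiv (t y : ℝ) : HasDerivAt (fun y => t ^ m * Real.cos (y * t + m * (π / 2)))
      (t ^ (m + 1) * Real.cos (y * t + (m + 1 : ℕ) * (π / 2))) y := by
    refine (((hasDerivAt_mul_const t).add_const _).cos.const_mul (t ^ m)).congr_deriv ?_
    rw [Nat.cast_succ, add_one_mul, ← add_assoc, Real.cos_add_pi_div_two]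
    ring
  exact (intervalIntegral.hasDerivAt_integral_of_dominated_loc_of_deriv_le (μ := volume)
    (bound := fun _ => 1) Filter.univ_mem
    (.of_forall fun y => (by fun_prop : Continuous _).aestronglyMeasurable)
    ((by fun_prop : Continuous fun t : ℝ => t ^ m * Real.cos (x * t + m * (π / 2))).intervalIntegrable
      _ _)
    (by fun_prop : Continuous _).aestronglyMeasurable
    (ae_of_all _ fun t ht y _ => norm_pow_mul_cos_le_one _ _ ht)
    intervalIntegrable_const
    (ae_of_all _ fun t _ y _ => hderiv t y)).2

lemma deriv_sincDeriv (m : ℕ) : deriv (sincDeriv m) = sincDeriv (m + 1) :=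
  funext fun x => (hasDerivAt_sincDeriv m x).deriv

lemma abs_sincDeriv_le_one (m : ℕ) (x : ℝ) : |sincDeriv m x| ≤ 1 := by
  simpa [sincDeriv] using intervalIntegral.norm_integral_le_of_norm_le_const
    (fun t ht => norm_pow_mul_cos_le_one m (x * t + m * (π / 2)) ht)

lemma contDiff_sincDeriv (m : ℕ) : ContDiff ℝ ∞ (sincDeriv m) := by
  refine contDiff_infty.2 fun n => ?_
  induction n generalizing m with
  | zero => exact contDiff_zero.2 (continuous_iff_continuousAt.2 fun x =>
      (hasDerivAt_sincDeriv m x).continuousAt)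
  | succ n ih =>
    rw [Nat.cast_succ, contDiff_succ_iff_deriv, deriv_sincDeriv]
    exact ⟨fun x => (hasDerivAt_sincDeriv m x).differentiableAt, by simp, ih (m + 1)⟩

lemma contDiff_sinc : ContDiff ℝ ∞ sinc := sincDeriv_zero ▸ contDiff_sincDeriv 0

lemma iteratedDeriv_sinc (n : ℕ) : iteratedDeriv n sinc = sincDeriv n := by
  induction n with
  | zero => exact sincDeriv_zero.symm
  | succ n ih => rw [iteratedDeriv_succ, ih, deriv_sincDeriv]

lemma abs_iteratedDeriv_sinc_le_one (n : ℕ) (x : ℝ) : |iteratedDeriv n sinc x| ≤ 1 :=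
  iteratedDeriv_sinc n ▸ abs_sincDeriv_le_one n x

section GeometricDerivativeBounds

variable {f g : ℝ → ℝ} {A B : ℝ}

lemma abs_iteratedDeriv_mul_le (hf : ContDiff ℝ ∞ f) (hg : ContDiff ℝ ∞ g)
    (hfA : ∀ n x, |iteratedDeriv n f x| ≤ A ^ n) (hgB : ∀ n x, |iteratedDeriv n g x| ≤ B ^ n)
    (n : ℕ) (x : ℝ) : |iteratedDeriv n (fun y => f y * g y) x| ≤ (A + B) ^ n := by
  rw [iteratedDeriv_fun_mul (contDiff_infty.1 hf n).contDiffAt (contDiff_infty.1 hg n).contDiffAt,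
    add_pow]
  refine (Finset.abs_sum_le_sum_abs _ _).trans (Finset.sum_le_sum fun i _ => ?_)
  calc _ = |iteratedDeriv i f x| * |iteratedDeriv (n - i) g x| * n.choose i := by
        rw [abs_mul, abs_mul, Nat.abs_cast]; ring
    _ ≤ _ := mul_le_mul_of_nonneg_right (mul_le_mul (hfA i x) (hgB (n - i) x) (abs_nonneg _)
        ((abs_nonneg _).trans (hfA i x))) (Nat.cast_nonneg _)

lemma abs_iteratedDeriv_pow_le (hf : ContDiff ℝ ∞ f)
    (hfA : ∀ n x, |iteratedDeriv n f x| ≤ A ^ n) (m n : ℕ) (x : ℝ) :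
    |iteratedDeriv n (fun y => f y ^ m) x| ≤ (m * A) ^ n := by
  induction m generalizing n x with
  | zero => cases n <;> simp [iteratedDeriv_const]
  | succ m ih =>
    simp only [pow_succ]
    rw [Nat.cast_succ, add_one_mul]
    exact abs_iteratedDeriv_mul_le (hf.pow m) hf ih hfA n x

lemma abs_iteratedDeriv_comp_mul_le (hf : ContDiff ℝ ∞ f)
    (hfA : ∀ n x, |iteratedDeriv n f x| ≤ A ^ n) (c : ℝ) (n : ℕ) (x : ℝ) :
    |iteratedDeriv n (fun y => f (c * y)) x| ≤ (|c| * A) ^ n := by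
  rw [iteratedDeriv_comp_const_mul (contDiff_infty.1 hf n), abs_mul, abs_pow, mul_pow]
  exact mul_le_mul_of_nonneg_left (hfA n _) (by positivity)

end GeometricDerivativeBounds

lemma abs_iteratedDeriv_sinc_div_four_pow_four_le_one (n : ℕ) (x : ℝ) :
    |iteratedDeriv n (fun y => sinc (y / 4) ^ 4) x| ≤ 1 := by
  have hsinc4 := abs_iteratedDeriv_pow_le contDiff_sinc
    (fun n x => (abs_iteratedDeriv_sinc_le_one n x).trans_eq (one_pow n).symm) 4
  have hscale : |(4 : ℝ)⁻¹| * ((4 : ℕ) * 1) = 1 := by norm_num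
  simpa only [div_eq_inv_mul, hscale, one_pow] using
    abs_iteratedDeriv_comp_mul_le (contDiff_sinc.pow 4) hsinc4 4⁻¹ n x

lemma iteratedFDeriv_succ_apply_eq_iteratedFDeriv_fderiv_apply {𝕜 E F : Type*}
    [NontriviallyNormedField 𝕜] [NormedAddCommGroup E] [NormedSpace 𝕜 E]
    [NormedAddCommGroup F] [NormedSpace 𝕜 F] {f : E → F} {k : ℕ} (hf : ContDiff 𝕜 (k + 1) f)
    (x : E) (q : Fin (k + 1) → E) :
    iteratedFDeriv 𝕜 (k + 1) f x q =
      iteratedFDeriv 𝕜 k (fun y => fderiv 𝕜 f y (q (Fin.last k))) x (Fin.init q) := by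
  rw [iteratedFDeriv_succ_apply_right]
  change _ = iteratedFDeriv 𝕜 k (ContinuousLinearMap.apply 𝕜 F (q (Fin.last k)) ∘ fderiv 𝕜 f) x _
  rw [ContinuousLinearMap.iteratedFDeriv_comp_left _ (hf.fderiv_right le_rfl).contDiffAt le_rfl]
  rfl

section CoordinateProducts

variable {ι : Type*}

lemma contDiff_prod_apply [Fintype ι] {φ : ι → ℝ → ℝ} (hφ : ∀ i, ContDiff ℝ ∞ (φ i)) :
    ContDiff ℝ ∞ (fun u : EuclideanSpace ℝ ι => ∏ i, φ i (u i)) :=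
  contDiff_prod fun i _ =>
    (hφ i).comp (EuclideanSpace.proj i : EuclideanSpace ℝ ι →L[ℝ] ℝ).contDiff

variable [DecidableEq ι]

lemma contDiff_update_deriv {φ : ι → ℝ → ℝ} (hφ : ∀ i, ContDiff ℝ ∞ (φ i)) (i : ι) :
    ∀ j, ContDiff ℝ ∞ (Function.update φ i (deriv (φ i)) j) :=
  (Function.forall_update_iff φ fun _ g => ContDiff ℝ ∞ g).2
    ⟨(contDiff_infty_iff_deriv.1 (hφ i)).2, fun j _ => hφ j⟩

lemma abs_iteratedDeriv_update_deriv_le_one {φ : ι → ℝ → ℝ}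
    (hφ_le : ∀ i n x, |iteratedDeriv n (φ i) x| ≤ 1) (i : ι) :
    ∀ j n x, |iteratedDeriv n (Function.update φ i (deriv (φ i)) j) x| ≤ 1 :=
  (Function.forall_update_iff φ fun _ g => ∀ n x, |iteratedDeriv n g x| ≤ 1).2
    ⟨fun n x => iteratedDeriv_succ' (f := φ i) ▸ hφ_le i (n + 1) x, fun j _ => hφ_le j⟩

variable [Fintype ι]

lemma fderiv_prod_apply_apply {φ : ι → ℝ → ℝ} (hφ : ∀ i, Differentiable ℝ (φ i))
    (y v : EuclideanSpace ℝ ι) :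
    fderiv ℝ (fun u : EuclideanSpace ℝ ι => ∏ i, φ i (u i)) y v =
      ∑ i, v i * ∏ j, Function.update φ i (deriv (φ i)) j (y j) := by
  have hcoord (i : ι) : HasFDerivAt (fun u : EuclideanSpace ℝ ι => φ i (u i))
      (deriv (φ i) (y i) • EuclideanSpace.proj i) y :=
    (hφ i (y i)).hasDerivAt.comp_hasFDerivAt y
      (EuclideanSpace.proj i : EuclideanSpace ℝ ι →L[ℝ] ℝ).hasFDerivAt
  rw [(HasFDerivAt.finsetProd (u := Finset.univ) fun i _ => hcoord i).fderiv, sum_apply]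
  refine Finset.sum_congr rfl fun i _ => ?_
  have hothers : ∏ j ∈ Finset.univ.erase i, Function.update φ i (deriv (φ i)) j (y j) =
      ∏ j ∈ Finset.univ.erase i, φ j (y j) :=
    Finset.prod_congr rfl fun j hj => by rw [Function.update_of_ne (Finset.ne_of_mem_erase hj)]
  rw [← Finset.mul_prod_erase _ _ (Finset.mem_univ i), Function.update_self, hothers]
  simp only [smul_apply, smul_eq_mul, PiLp.proj_apply]
  ring

theorem abs_iteratedFDeriv_prod_apply_le (k : ℕ) {φ : ι → ℝ → ℝ}
    (hφ : ∀ i, ContDiff ℝ ∞ (φ i)) (hφ_le : ∀ i n x, |iteratedDeriv n (φ i) x| ≤ 1)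
    (h : EuclideanSpace ℝ ι) (q : Fin k → EuclideanSpace ℝ ι) :
    |iteratedFDeriv ℝ k (fun u => ∏ i, φ i (u i)) h q| ≤ ∏ l, ∑ i, |q l i| := by
  induction k generalizing φ with
  | zero =>
    simpa [Finset.abs_prod] using Finset.prod_le_one (fun i _ => abs_nonneg _)
      fun i _ => by simpa using hφ_le i 0 (h i)
  | succ k ih =>
    set v := q (Fin.last k)
    set ψ : ι → ι → ℝ → ℝ := fun i => Function.update φ i (deriv (φ i))
    set G : ι → EuclideanSpace ℝ ι → ℝ := fun i y => ∏ j, ψ i j (y j)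
    have hG (i : ι) : ContDiff ℝ k (G i) :=
      contDiff_infty.1 (contDiff_prod_apply (contDiff_update_deriv hφ i)) k
    have hdir : (fun y => fderiv ℝ (fun u : EuclideanSpace ℝ ι => ∏ i, φ i (u i)) y v) =
        ∑ i, v i • G i := by
      ext y
      simp [fderiv_prod_apply_apply (fun i => (hφ i).differentiable (by simp)), G, ψ]
    rw [iteratedFDeriv_succ_apply_eq_iteratedFDeriv_fderiv_apply
      (contDiff_infty.1 (contDiff_prod_apply hφ) (k + 1)), hdir,
      iteratedFDeriv_sum_apply (f := fun i => v i • G i) fun i _ =>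
        ((hG i).const_smul (v i)).contDiffAt]
    calc _ = |∑ i, v i * iteratedFDeriv ℝ k (G i) h (Fin.init q)| := by
          rw [sum_apply]
          congr 1
          refine Finset.sum_congr rfl fun i _ => ?_
          rw [iteratedFDeriv_const_smul_apply (hG i).contDiffAt]
          rfl
      _ ≤ ∑ i, |v i| * |iteratedFDeriv ℝ k (G i) h (Fin.init q)| := by
          simpa only [abs_mul] using Finset.abs_sum_le_sum_abs
            (fun i => v i * iteratedFDeriv ℝ k (G i) h (Fin.init q)) Finset.univ
      _ ≤ ∑ i, |v i| * ∏ l, ∑ j, |Fin.init q l j| :=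
          Finset.sum_le_sum fun i _ => mul_le_mul_of_nonneg_left
            (ih (contDiff_update_deriv hφ i) (abs_iteratedDeriv_update_deriv_le_one hφ_le i)
              (Fin.init q)) (abs_nonneg _)
      _ = ∏ l, ∑ i, |q l i| := by
          rw [← Finset.sum_mul, Fin.prod_univ_castSucc, mul_comm]
          rfl

end CoordinateProducts

lemma sum_abs_le_sqrt_card_mul_norm {ι : Type*} [Fintype ι] (a : EuclideanSpace ℝ ι) :
    ∑ i, |a i| ≤ √(Fintype.card ι) * ‖a‖ := by
  simpa [EuclideanSpace.norm_eq] using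
    Real.sum_mul_le_sqrt_mul_sqrt Finset.univ (fun _ => 1) fun i => |a i|

theorem stmt_18_general (d : ℕ) (k : ℕ) (h : EuclideanSpace ℝ (Fin d))
    (q : Fin k → EuclideanSpace ℝ (Fin d)) :
    |iteratedFDeriv ℝ k (Psi1 d) h q| ≤ Real.sqrt d ^ k * ∏ l, ‖q l‖ := by
  calc |iteratedFDeriv ℝ k (Psi1 d) h q| ≤ ∏ l, ∑ i, |q l i| :=
        abs_iteratedFDeriv_prod_apply_le k
          (fun _ => (contDiff_sinc.comp (contDiff_id.div_const 4)).pow 4)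
          (fun _ => abs_iteratedDeriv_sinc_div_four_pow_four_le_one) h q
    _ ≤ ∏ l, √d * ‖q l‖ := Finset.prod_le_prod (fun l _ => by positivity)
        fun l _ => by simpa using sum_abs_le_sqrt_card_mul_norm (q l)
    _ = √d ^ k * ∏ l, ‖q l‖ := by simp [Finset.prod_mul_distrib]

theorem stmt_18 (d : ℕ) (hd : 1 ≤ d) (k : ℕ) (h : EuclideanSpace ℝ (Fin d))
    (q : Fin k → EuclideanSpace ℝ (Fin d)) :
    |iteratedFDeriv ℝ k (Psi1 d) h q| ≤ Real.sqrt d ^ k * ∏ l, ‖q l‖ :=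
  stmt_18_general d k h q
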